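/- Let n ≥ 1 be an integer, r ≥ 1 and ε ∈ (0, 1/2). There exists a constant C = C(n, r, ε) such that for every integer k ≥ 2 and every r-reduced n×n matrix Y with Y ≥ 1_n in the Loewner order, the set C_Y := {T ∈ Λ_n : every eigenvalue of Y^{1/2} T Y^{1/2} lies in the open interval (k/(4π) − k^{1/2+ε}, k/(4π) + k^{1/2+ε})} satisfies #C_Y ≤ C · k^{(1/2+ε)·n(n+1)/2} · det(Y)^{−(n+1)/4}. -/

import Mathlib

open scoped Real

/-- `Λ_n`: real symmetric positive definite `n × n` matrices with integral diagonal
entries such that `2T` has integer entries (half-integral matrices). -/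
def IsHalfIntegral {n : ℕ} (T : Matrix (Fin n) (Fin n) ℝ) : Prop :=
  T.PosDef ∧ (∀ i, ∃ z : ℤ, T i i = z) ∧ (∀ i j, ∃ z : ℤ, 2 * T i j = z)

/-- The Loewner order: `A ≤ B` iff `B - A` is positive semidefinite. -/
def LoewnerLE {n : ℕ} (A B : Matrix (Fin n) (Fin n) ℝ) : Prop := (B - A).PosSemidef

/-- The diagonal part `Y_D` of a matrix `Y`. -/
def diagPart {n : ℕ} (Y : Matrix (Fin n) (Fin n) ℝ) : Matrix (Fin n) (Fin n) ℝ :=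
  Matrix.diagonal fun i => Y i i

/-- `Y` is `r`-reduced: positive definite with `Y_D / r ≤ Y ≤ r • Y_D` in the
Loewner order. -/
def MinkReduced {n : ℕ} (r : ℝ) (Y : Matrix (Fin n) (Fin n) ℝ) : Prop :=
  Y.PosDef ∧ LoewnerLE (r⁻¹ • diagPart Y) Y ∧ LoewnerLE Y (r • diagPart Y)

/-- The square root of a positive semidefinite matrix, as `Matrix.PosSemidef.sqrt` was defined
in the older Mathlib (since removed in favour of `CFC.sqrt`). -/
noncomputable def Matrix.PosSemidef.sqrt {n : Type*} [Fintype n] [DecidableEq n]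
    {A : Matrix n n ℝ} (hA : A.PosSemidef) : Matrix n n ℝ :=
  hA.1.eigenvectorUnitary.1 * Matrix.diagonal ((↑) ∘ (√·) ∘ hA.1.eigenvalues) *
    (star hA.1.eigenvectorUnitary : Matrix n n ℝ)


/-!
Conjugating by `Y^{-1/2}`, the eigenvalue condition says `a • Y⁻¹ ≤ T ≤ b • Y⁻¹` in the Loewner
order, where `a, b = k/(4π) ∓ k^{1/2+ε}`. The `2 × 2` minors of `T - a • Y⁻¹ ≥ 0` and
`b • Y⁻¹ - T ≥ 0` then confine `T i j` to an interval of length `2(b - a)√(Y⁻¹ i i * Y⁻¹ j j)`,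
and for `r`-reduced `Y` one has `Y⁻¹ i i ≤ r / Y i i`. As `2T` is integral and symmetric, `T` is
determined by its `n(n+1)/2` upper entries, each ranging over `O(r (b - a) (Y i i * Y j j)^{-1/4})`
integers: the `+1` in the count of integers is absorbed because a single admissible `T`, having
`T i i ≥ 1`, forces `Y i i ≤ r b`. The product of these bounds is `(∏ i, Y i i)^{-(n+1)/4}`, and
`det Y ≤ r^n ∏ i, Y i i` because `Y ≤ r • Y_D`.
-/

section LoewnerOrder

open scoped MatrixOrder

namespace Matrix

variable {m : Type*}

lemma PosSemidef.sq_apply_le_mul {M : Matrix m m ℝ} (hM : M.PosSemidef) (i j : m) :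
    M i j ^ 2 ≤ M i i * M j j := by
  have h := (hM.submatrix ![i, j]).det_nonneg
  rw [det_fin_two] at h
  have hji : M j i = M i j := by simpa using hM.1.apply i j
  simp [hji] at h
  nlinarith

lemma abs_apply_sub_le_of_smul_le_of_le_smul {W T : Matrix m m ℝ} {a b : ℝ} (hab : a ≤ b)
    (hlo : a • W ≤ T) (hhi : T ≤ b • W) (i j : m) :
    |T i j - a * W i j| ≤ (b - a) * √(W i i * W j j) := by
  have hM : (T - a • W).PosSemidef := hlo
  have hN : (b • W - T).PosSemidef := hhi
  have hle (l : m) : T l l - a * W l l ≤ (b - a) * W l l := by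
    have := hN.diag_nonneg (i := l)
    simp only [sub_apply, smul_apply, smul_eq_mul] at this
    linarith
  have hnn (l : m) : 0 ≤ T l l - a * W l l := by
    simpa using hM.diag_nonneg (i := l)
  have hsq : (T i j - a * W i j) ^ 2 ≤ (b - a) ^ 2 * (W i i * W j j) := by
    calc (T i j - a * W i j) ^ 2 ≤ (T i i - a * W i i) * (T j j - a * W j j) := by
          simpa using hM.sq_apply_le_mul i j
      _ ≤ ((b - a) * W i i) * ((b - a) * W j j) :=
          mul_le_mul (hle i) (hle j) (hnn j) ((hnn i).trans (hle i))
      _ = (b - a) ^ 2 * (W i i * W j j) := by ring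
  calc |T i j - a * W i j| ≤ √((b - a) ^ 2 * (W i i * W j j)) := Real.abs_le_sqrt hsq
    _ = (b - a) * √(W i i * W j j) := by
      rw [Real.sqrt_mul (sq_nonneg _), Real.sqrt_sq (sub_nonneg.2 hab)]

variable [Fintype m] [DecidableEq m]

lemma PosSemidef.sqrt_eq_cfcSqrt {A : Matrix m m ℝ} (hA : A.PosSemidef) :
    hA.sqrt = CFC.sqrt A := by
  rw [CFC.sqrt_eq_real_sqrt A hA.nonneg, cfcₙ_eq_cfc, hA.1.cfc_eq]
  rfl

lemma PosDef.isUnit_det_cfcSqrt {Y : Matrix m m ℝ} (hY : Y.PosDef) :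
    IsUnit (CFC.sqrt Y).det := by
  rw [← isUnit_iff_isUnit_det]
  exact isUnit_of_mul_isUnit_left
    ((CFC.sqrt_mul_sqrt_self Y hY.posSemidef.nonneg).symm ▸ hY.isUnit)

lemma PosDef.inv_cfcSqrt_mul_self {Y : Matrix m m ℝ} (hY : Y.PosDef) :
    (CFC.sqrt Y)⁻¹ * (CFC.sqrt Y)⁻¹ = Y⁻¹ := by
  rw [← mul_inv_rev, CFC.sqrt_mul_sqrt_self Y hY.posSemidef.nonneg]

lemma smul_inv_le_of_spectrum_subset_Icc {Y T : Matrix m m ℝ} (hY : Y.PosDef)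
    (hT : T.IsHermitian) {a b : ℝ}
    (h : spectrum ℝ (CFC.sqrt Y * T * CFC.sqrt Y) ⊆ Set.Icc a b) :
    a • Y⁻¹ ≤ T ∧ T ≤ b • Y⁻¹ := by
  set R := CFC.sqrt Y
  have hR : IsSelfAdjoint R := IsSelfAdjoint.of_nonneg (CFC.sqrt_nonneg Y)
  have hS : IsSelfAdjoint (R * T * R) := by
    simpa only [hR.star_eq] using hT.isSelfAdjoint.conjugate R
  have hconj (c : ℝ) : R⁻¹ * algebraMap ℝ _ c * R⁻¹ = c • Y⁻¹ := by
    rw [Algebra.algebraMap_eq_smul_one, mul_smul_comm, smul_mul_assoc, mul_one,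
      hY.inv_cfcSqrt_mul_self]
  have hcancel : R⁻¹ * (R * T * R) * R⁻¹ = T := by
    rw [← mul_assoc, ← mul_assoc, nonsing_inv_mul _ hY.isUnit_det_cfcSqrt, one_mul, mul_assoc,
      mul_nonsing_inv _ hY.isUnit_det_cfcSqrt, mul_one]
  have hRinv : IsSelfAdjoint R⁻¹ := IsHermitian.inv hR
  constructor
  · have := hRinv.conjugate_le_conjugate
      ((algebraMap_le_iff_le_spectrum hS).2 fun x hx => (h hx).1)
    rwa [hconj, hcancel] at this
  · have := hRinv.conjugate_le_conjugate
      ((le_algebraMap_iff_spectrum_le hS).2 fun x hx => (h hx).2)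
    rwa [hconj, hcancel] at this

lemma one_le_det_of_one_le {K : Matrix m m ℝ} (h : 1 ≤ K) : 1 ≤ K.det := by
  have hK : IsSelfAdjoint K := IsSelfAdjoint.of_nonneg (zero_le_one.trans h)
  have hspec := (algebraMap_le_iff_le_spectrum (r := (1 : ℝ)) hK).1 (by simpa using h)
  rw [IsHermitian.det_eq_prod_eigenvalues hK]
  exact Finset.one_le_prod fun i _ => hspec _ (IsHermitian.eigenvalues_mem_spectrum_real hK i)

lemma PosDef.det_le_det_of_le {A B : Matrix m m ℝ} (hA : A.PosDef) (hAB : A ≤ B) :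
    A.det ≤ B.det := by
  set R := CFC.sqrt A
  have hRinv : IsSelfAdjoint R⁻¹ :=
    IsHermitian.inv (IsSelfAdjoint.of_nonneg (CFC.sqrt_nonneg A))
  have hone : R⁻¹ * A * R⁻¹ = 1 := by
    rw [← CFC.sqrt_mul_sqrt_self A hA.posSemidef.nonneg, ← mul_assoc,
      nonsing_inv_mul _ hA.isUnit_det_cfcSqrt, one_mul, mul_nonsing_inv _ hA.isUnit_det_cfcSqrt]
  have hdet := one_le_det_of_one_le (hone ▸ hRinv.conjugate_le_conjugate hAB)
  rwa [det_mul, mul_comm, det_mul, ← mul_assoc, ← det_mul, hA.inv_cfcSqrt_mul_self,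
    det_nonsing_inv, Ring.inverse_eq_inv', inv_mul_eq_div, one_le_div hA.det_pos] at hdet

lemma PosDef.inv_apply_self_le {Y : Matrix m m ℝ} (hY : Y.PosDef) {r : ℝ} (hr : 0 < r)
    (h : r⁻¹ • diagonal Y.diag ≤ Y) (i : m) : Y⁻¹ i i ≤ r / Y i i := by
  set W := Y⁻¹
  have hW : W.IsHermitian := hY.inv.1
  have hconj := IsSelfAdjoint.conjugate_le_conjugate h hW
  rw [nonsing_inv_mul _ ((isUnit_iff_isUnit_det Y).mp hY.isUnit), one_mul] at hconj
  have hdiag : r⁻¹ * ∑ j, W i j ^ 2 * Y j j ≤ W i i := by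
    have := (le_iff.1 hconj).diag_nonneg (i := i)
    simp only [sub_apply, mul_apply, smul_apply, diagonal_apply, diag_apply, smul_eq_mul,
      mul_ite, mul_zero, Finset.sum_ite_eq', Finset.mem_univ, if_true, sub_nonneg] at this
    refine le_of_eq_of_le ?_ this
    rw [Finset.mul_sum]
    refine Finset.sum_congr rfl fun j _ => ?_
    rw [show W j i = W i j by simpa using hW.apply i j]
    ring
  have hterm : W i i ^ 2 * Y i i ≤ ∑ j, W i j ^ 2 * Y j j :=
    Finset.single_le_sum (f := fun j => W i j ^ 2 * Y j j)
      (fun j _ => mul_nonneg (sq_nonneg _) hY.diag_pos.le) (Finset.mem_univ i)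
  have hsq : W i i ^ 2 * Y i i ≤ r * W i i := by
    rw [← inv_mul_le_iff₀ hr]
    exact (mul_le_mul_of_nonneg_left hterm (by positivity)).trans hdiag
  have hWi : 0 < W i i := hY.inv.diag_pos
  rw [le_div_iff₀ hY.diag_pos]
  nlinarith

end Matrix

end LoewnerOrder

section Counting

open Finset

variable {m : Type*} [Fintype m] [LinearOrder m]

theorem prod_fst_le_snd_mul_eq_pow {M : Type*} [CommMonoid M] (g : m → M) :
    ∏ q : {p : m × m // p.1 ≤ p.2}, g q.1.1 * g q.1.2 = (∏ i, g i) ^ (Fintype.card m + 1) := by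
  classical
  have hcard (i : m) : #{j | i ≤ j} + #{j | j ≤ i} = Fintype.card m + 1 := by
    have hsplit := card_filter_add_card_filter_not (s := univ) (fun j => i ≤ j)
    have hIic : univ.filter (fun j => j ≤ i) = insert i (univ.filter fun j => j < i) := by
      ext j; simp [le_iff_lt_or_eq, or_comm]
    simp only [not_le, card_univ] at hsplit
    rw [hIic, card_insert_of_notMem (by simp)]
    omega
  calc ∏ q : {p : m × m // p.1 ≤ p.2}, g q.1.1 * g q.1.2
      = ∏ i, ∏ j, ((if i ≤ j then g i else 1) * (if i ≤ j then g j else 1)) := by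
        rw [← prod_subtype {p : m × m | p.1 ≤ p.2} (by simp) (fun p => g p.1 * g p.2),
          prod_filter, Fintype.prod_prod_type]
        congr! 2 with i _ j
        split_ifs <;> simp
    _ = (∏ i, g i ^ #{j | i ≤ j}) * ∏ j, g j ^ #{i | i ≤ j} := by
        simp_rw [prod_mul_distrib]
        rw [prod_comm (f := fun i j => if i ≤ j then g j else 1)]
        simp_rw [← prod_filter, prod_const]
    _ = (∏ i, g i) ^ (Fintype.card m + 1) := by
        simp_rw [← prod_mul_distrib, ← pow_add, hcard, prod_pow]

theorem card_fst_le_snd :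
    (Fintype.card {p : m × m // p.1 ≤ p.2} : ℝ) = Fintype.card m * (Fintype.card m + 1) / 2 := by
  rw [← Fintype.card_congr Sym2.sortEquiv, Sym2.card, Nat.cast_choose_two]
  push_cast
  ring

theorem prod_fst_le_snd_mul_rpow (s : ℝ) {y : m → ℝ} (hy : ∀ i, 0 ≤ y i) :
    ∏ q : {p : m × m // p.1 ≤ p.2}, s * (y q.1.1 ^ (-(1 / 4) : ℝ) * y q.1.2 ^ (-(1 / 4) : ℝ)) =
      s ^ ((Fintype.card m * (Fintype.card m + 1) : ℝ) / 2) *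
        (∏ i, y i) ^ (-((Fintype.card m : ℝ) + 1) / 4) := by
  rw [prod_mul_distrib, prod_const, card_univ, ← Real.rpow_natCast, card_fst_le_snd,
    prod_fst_le_snd_mul_eq_pow fun i => y i ^ (-(1 / 4) : ℝ),
    Real.finsetProd_rpow _ _ fun i _ => hy i, ← Real.rpow_natCast,
    ← Real.rpow_mul (prod_nonneg fun i _ => hy i)]
  congr 2
  push_cast
  ring

theorem Int.card_Icc_ceil_floor_le {x y : ℝ} (hxy : x ≤ y) :
    ((Icc ⌈x⌉ ⌊y⌋).card : ℝ) ≤ y - x + 1 := by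
  rw [Int.card_Icc, ← Int.cast_natCast, Int.toNat_eq_max]
  push_cast
  exact max_le (by linarith [Int.floor_le y, Int.le_ceil x]) (by linarith)

theorem ncard_le_prod_of_abs_sub_apply_le {S : Set (Matrix m m ℝ)} {c ρ : Matrix m m ℝ}
    (hρ : ∀ i j, 0 ≤ ρ i j)
    (hS : ∀ T ∈ S, T.IsHermitian ∧ (∀ i j, ∃ z : ℤ, 2 * T i j = z) ∧
      ∀ i j, |T i j - c i j| ≤ ρ i j) :
    S.Finite ∧ (S.ncard : ℝ) ≤ ∏ q : {p : m × m // p.1 ≤ p.2}, (4 * ρ q.1.1 q.1.2 + 1) := by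
  classical
  set B := Fintype.piFinset fun q : {p : m × m // p.1 ≤ p.2} =>
    Icc ⌈2 * (c q.1.1 q.1.2 - ρ q.1.1 q.1.2)⌉ ⌊2 * (c q.1.1 q.1.2 + ρ q.1.1 q.1.2)⌋
  set Φ : Matrix m m ℝ → {p : m × m // p.1 ≤ p.2} → ℤ := fun T q => round (2 * T q.1.1 q.1.2)
  have hΦ : ∀ T ∈ S, ∀ i j, (round (2 * T i j) : ℝ) = 2 * T i j := by
    intro T hT i j
    obtain ⟨z, hz⟩ := (hS T hT).2.1 i j
    rw [hz, round_intCast]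
  have hmaps : Set.MapsTo Φ S B := by
    intro T hT
    simp only [B, Φ, Finset.mem_coe, Fintype.mem_piFinset, mem_Icc, Int.ceil_le, Int.le_floor,
      hΦ T hT]
    intro q
    have := abs_le.1 ((hS T hT).2.2 q.1.1 q.1.2)
    constructor <;> linarith [this.1, this.2]
  have hinj : Set.InjOn Φ S := by
    intro T hT T' hT' hTT'
    have key (q : {p : m × m // p.1 ≤ p.2}) : T q.1.1 q.1.2 = T' q.1.1 q.1.2 := by
      have h := congrArg (fun f : _ → ℤ => (f q : ℝ)) hTT'
      simp only [Φ, hΦ T hT, hΦ T' hT'] at h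
      linarith
    ext i j
    rcases le_total i j with hij | hji
    · exact key ⟨(i, j), hij⟩
    · have h := key ⟨(j, i), hji⟩
      simp only at h
      rwa [← (hS T hT).1.apply i j, ← (hS T' hT').1.apply i j, star_trivial, star_trivial]
  refine ⟨Set.Finite.of_injOn hmaps hinj B.finite_toSet, ?_⟩
  calc (S.ncard : ℝ) ≤ B.card := by
        exact_mod_cast (Set.ncard_le_ncard_of_injOn Φ hmaps hinj B.finite_toSet).trans
          (Set.ncard_coe_finset B).le
    _ ≤ ∏ q : {p : m × m // p.1 ≤ p.2}, (4 * ρ q.1.1 q.1.2 + 1) := by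
        rw [Fintype.card_piFinset]
        push_cast
        refine prod_le_prod (fun _ _ => Nat.cast_nonneg _) fun q _ => ?_
        refine (Int.card_Icc_ceil_floor_le ?_).trans_eq (by ring)
        linarith [hρ q.1.1 q.1.2]

end Counting

theorem four_mul_div_sqrt_add_one_le {s x y : ℝ} (hs : 0 ≤ s) (hx : 1 ≤ x) (hy : 1 ≤ y)
    (hxy : x * y ≤ s ^ 4) :
    4 * (s / √(x * y)) + 1 ≤ 5 * s * (x ^ (-(1 / 4) : ℝ) * y ^ (-(1 / 4) : ℝ)) := by
  have hxy0 : 0 ≤ x * y := by positivity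
  set u := (x * y) ^ (1 / 4 : ℝ)
  have hu4 : u ^ 4 = x * y := by
    rw [← Real.rpow_natCast, ← Real.rpow_mul hxy0]; norm_num
  have hu1 : 1 ≤ u := Real.one_le_rpow (one_le_mul_of_one_le_of_one_le hx hy) (by norm_num)
  have hus : u ≤ s := (pow_le_pow_iff_left₀ (by positivity) hs (by norm_num)).1 (hu4 ▸ hxy)
  have hsqrt : √(x * y) = u ^ 2 := by
    rw [← hu4, show u ^ 4 = (u ^ 2) ^ 2 by ring, Real.sqrt_sq (by positivity)]
  have hrpow : x ^ (-(1 / 4) : ℝ) * y ^ (-(1 / 4) : ℝ) = u⁻¹ := by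
    rw [← Real.mul_rpow (by positivity) (by positivity), Real.rpow_neg hxy0]
  have hsq : s / u ^ 2 ≤ s / u :=
    div_le_div_of_nonneg_left hs (by positivity) (by nlinarith)
  have hone : 1 ≤ s / u := (one_le_div (by positivity)).2 hus
  rw [hsqrt, hrpow, ← div_eq_mul_inv, mul_div_assoc]
  linarith

section HalfIntegralWindow

open scoped MatrixOrder

variable {n : ℕ} {r a b : ℝ} {Y T : Matrix (Fin n) (Fin n) ℝ}

def halfIntegralWindow (Y : Matrix (Fin n) (Fin n) ℝ) (a b : ℝ) :
    Set (Matrix (Fin n) (Fin n) ℝ) :=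
  {T | IsHalfIntegral T ∧ spectrum ℝ (CFC.sqrt Y * T * CFC.sqrt Y) ⊆ Set.Icc a b}

lemma setOf_spectrum_sqrt_subset_halfIntegralWindow (hY : Y.PosDef) :
    {T | IsHalfIntegral T ∧
      ∀ μ ∈ spectrum ℝ (hY.posSemidef.sqrt * T * hY.posSemidef.sqrt), μ ∈ Set.Ioo a b} ⊆
      halfIntegralWindow Y a b := by
  rw [hY.posSemidef.sqrt_eq_cfcSqrt]
  exact fun T hT => ⟨hT.1, fun μ hμ => Set.Ioo_subset_Icc_self (hT.2 μ hμ)⟩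

lemma IsHalfIntegral.one_le_apply_self (hT : IsHalfIntegral T) (i : Fin n) : 1 ≤ T i i := by
  obtain ⟨z, hz⟩ := hT.2.1 i
  have hz0 : (0 : ℝ) < z := hz ▸ hT.1.diag_pos
  rw [hz]
  exact_mod_cast (Int.cast_pos.1 hz0 : 0 < z)

lemma MinkReduced.inv_apply_self_le (hY : MinkReduced r Y) (hr : 0 < r) (i : Fin n) :
    Y⁻¹ i i ≤ r / Y i i :=
  hY.1.inv_apply_self_le hr hY.2.1 i

lemma MinkReduced.det_le (hY : MinkReduced r Y) : Y.det ≤ r ^ n * ∏ i, Y i i :=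
  (hY.1.det_le_det_of_le hY.2.2).trans_eq (by simp [diagPart])

lemma abs_apply_sub_le_of_mem_halfIntegralWindow (hY : MinkReduced r Y) (hr : 0 < r)
    (hab : a ≤ b) (hT : T ∈ halfIntegralWindow Y a b) (i j : Fin n) :
    |T i j - (a • Y⁻¹) i j| ≤ r * (b - a) / √(Y i i * Y j j) := by
  obtain ⟨hlo, hhi⟩ := Matrix.smul_inv_le_of_spectrum_subset_Icc hY.1 hT.1.1.1 hT.2
  have hW (l : Fin n) : 0 ≤ Y⁻¹ l l := hY.1.inv.diag_pos.le
  calc |T i j - (a • Y⁻¹) i j| ≤ (b - a) * √(Y⁻¹ i i * Y⁻¹ j j) := by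
        simpa using Matrix.abs_apply_sub_le_of_smul_le_of_le_smul hab hlo hhi i j
    _ ≤ (b - a) * √((r / Y i i) * (r / Y j j)) := by
        gcongr (b - a) * √(?_)
        exact mul_le_mul (hY.inv_apply_self_le hr i) (hY.inv_apply_self_le hr j) (hW j)
          (div_nonneg hr.le hY.1.diag_pos.le)
    _ = r * (b - a) / √(Y i i * Y j j) := by
        rw [div_mul_div_comm, ← sq, Real.sqrt_div' _ (mul_nonneg hY.1.diag_pos.le
          hY.1.diag_pos.le), Real.sqrt_sq hr.le]
        ring

lemma apply_self_le_of_mem_halfIntegralWindow (hY : MinkReduced r Y) (hr : 0 < r)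
    (hT : T ∈ halfIntegralWindow Y a b) (i : Fin n) : Y i i ≤ r * b := by
  obtain ⟨-, hhi⟩ := Matrix.smul_inv_le_of_spectrum_subset_Icc hY.1 hT.1.1.1 hT.2
  have hTb : T i i ≤ b * Y⁻¹ i i := by
    simpa using (Matrix.le_iff.1 hhi).diag_nonneg (i := i)
  have hWi : 0 < Y⁻¹ i i := hY.1.inv.diag_pos
  have hYi : 0 < Y i i := hY.1.diag_pos
  have h1 := (hT.1.one_le_apply_self i).trans hTb
  have hb : 0 < b := pos_of_mul_pos_left (zero_lt_one.trans_le h1) hWi.le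
  have h2 : 1 ≤ b * (r / Y i i) :=
    h1.trans (mul_le_mul_of_nonneg_left (hY.inv_apply_self_le hr i) hb.le)
  rw [mul_div_assoc', le_div_iff₀ hYi, one_mul] at h2
  linarith

theorem halfIntegralWindow_finite_and_ncard_le (hr : 1 ≤ r) (hab : a ≤ b)
    (hb : b ≤ (b - a) ^ 2) (hY : MinkReduced r Y) (hY1 : LoewnerLE 1 Y) :
    (halfIntegralWindow Y a b).Finite ∧
      ((halfIntegralWindow Y a b).ncard : ℝ) ≤
        (5 * r * (b - a)) ^ ((n * (n + 1) : ℝ) / 2) * (Y.det / r ^ n) ^ (-((n : ℝ) + 1) / 4) := by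
  have hr0 : 0 < r := by linarith
  have hba : 0 ≤ b - a := sub_nonneg.2 hab
  have hdet : 0 < Y.det / r ^ n := div_pos hY.1.det_pos (by positivity)
  rcases (halfIntegralWindow Y a b).eq_empty_or_nonempty with hS | ⟨T₀, hT₀⟩
  · rw [hS, Set.ncard_empty, Nat.cast_zero]
    exact ⟨Set.finite_empty, by positivity⟩
  have hdiag_one (i : Fin n) : 1 ≤ Y i i := by
    simpa using (show (Y - 1).PosSemidef from hY1).diag_nonneg (i := i)
  have hdiag_sq (i : Fin n) : Y i i ≤ (r * (b - a)) ^ 2 := by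
    calc Y i i ≤ r * b := apply_self_le_of_mem_halfIntegralWindow hY hr0 hT₀ i
      _ ≤ r * (b - a) ^ 2 := mul_le_mul_of_nonneg_left hb hr0.le
      _ ≤ (r * (b - a)) ^ 2 := by
        rw [mul_pow]
        exact mul_le_mul_of_nonneg_right (by nlinarith) (sq_nonneg _)
  have hdiag_mul (i j : Fin n) : Y i i * Y j j ≤ (r * (b - a)) ^ 4 := by
    nlinarith [hdiag_sq i, hdiag_sq j, hdiag_one i, hdiag_one j]
  obtain ⟨hfin, hcard⟩ := ncard_le_prod_of_abs_sub_apply_le (c := a • Y⁻¹)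
    (ρ := fun i j => r * (b - a) / √(Y i i * Y j j)) (fun i j => by positivity)
    fun T hT => ⟨hT.1.1.1, hT.1.2.2, abs_apply_sub_le_of_mem_halfIntegralWindow hY hr0 hab hT⟩
  refine ⟨hfin, hcard.trans ?_⟩
  calc ∏ q : {p : Fin n × Fin n // p.1 ≤ p.2},
        (4 * (r * (b - a) / √(Y q.1.1 q.1.1 * Y q.1.2 q.1.2)) + 1)
      ≤ ∏ q : {p : Fin n × Fin n // p.1 ≤ p.2},
        5 * r * (b - a) * (Y q.1.1 q.1.1 ^ (-(1 / 4) : ℝ) * Y q.1.2 q.1.2 ^ (-(1 / 4) : ℝ)) :=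
        Finset.prod_le_prod (fun q _ => by positivity) fun q _ =>
          (four_mul_div_sqrt_add_one_le (by positivity) (hdiag_one _) (hdiag_one _)
            (hdiag_mul _ _)).trans_eq (by ring)
    _ = (5 * r * (b - a)) ^ ((n * (n + 1) : ℝ) / 2) * (∏ i, Y i i) ^ (-((n : ℝ) + 1) / 4) := by
        simpa using prod_fst_le_snd_mul_rpow _ fun i => (hdiag_one i).trans' zero_le_one
    _ ≤ (5 * r * (b - a)) ^ ((n * (n + 1) : ℝ) / 2) * (Y.det / r ^ n) ^ (-((n : ℝ) + 1) / 4) := by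
        refine mul_le_mul_of_nonneg_left (Real.rpow_le_rpow_of_nonpos hdet ?_ ?_) (by positivity)
        · rw [div_le_iff₀ (by positivity), mul_comm]
          exact hY.det_le
        · linarith [(n.cast_nonneg : (0 : ℝ) ≤ n)]

end HalfIntegralWindow

theorem statement2_general {n : ℕ} (r ε : ℝ) (hr : 1 ≤ r)
    (hε : ε ∈ Set.Ioo (0 : ℝ) (1 / 2)) :
    ∃ C : ℝ, 0 < C ∧ ∀ k : ℕ, 2 ≤ k →
      ∀ Y : Matrix (Fin n) (Fin n) ℝ, ∀ hred : MinkReduced r Y,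
        LoewnerLE 1 Y →
        {T : Matrix (Fin n) (Fin n) ℝ | IsHalfIntegral T ∧
            ∀ μ ∈ spectrum ℝ
              (hred.1.posSemidef.sqrt * T * hred.1.posSemidef.sqrt),
              μ ∈ Set.Ioo ((k : ℝ) / (4 * π) - (k : ℝ) ^ ((1 : ℝ) / 2 + ε))
                ((k : ℝ) / (4 * π) + (k : ℝ) ^ ((1 : ℝ) / 2 + ε))}.Finite ∧
        ({T : Matrix (Fin n) (Fin n) ℝ | IsHalfIntegral T ∧
            ∀ μ ∈ spectrum ℝ
              (hred.1.posSemidef.sqrt * T * hred.1.posSemidef.sqrt),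
              μ ∈ Set.Ioo ((k : ℝ) / (4 * π) - (k : ℝ) ^ ((1 : ℝ) / 2 + ε))
                ((k : ℝ) / (4 * π) + (k : ℝ) ^ ((1 : ℝ) / 2 + ε))}.ncard : ℝ)
          ≤ C * (k : ℝ) ^ ((1 / 2 + ε) * (n * (n + 1) : ℝ) / 2) *
              Y.det ^ (-((n : ℝ) + 1) / 4) := by
  refine ⟨(10 * r) ^ ((n * (n + 1) : ℝ) / 2) * (r ^ n) ^ (((n : ℝ) + 1) / 4), by positivity, ?_⟩
  intro k hk Y hred hY1
  set δ := (k : ℝ) ^ ((1 : ℝ) / 2 + ε)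
  have hk1 : (1 : ℝ) ≤ k := by exact_mod_cast (by omega : 1 ≤ k)
  have hδ1 : 1 ≤ δ := Real.one_le_rpow hk1 (by linarith [hε.1])
  have hkδ : (k : ℝ) ≤ δ ^ 2 := by
    rw [← Real.rpow_natCast, ← Real.rpow_mul (by positivity)]
    exact Real.self_le_rpow_of_one_le hk1 (by push_cast; linarith [hε.1])
  have hwidth : (k : ℝ) / (4 * π) + δ ≤ ((k / (4 * π) + δ) - (k / (4 * π) - δ)) ^ 2 := by
    have : (k : ℝ) / (4 * π) ≤ k := div_le_self (by positivity) (by linarith [Real.pi_gt_three])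
    nlinarith
  obtain ⟨hfin, hcard⟩ := halfIntegralWindow_finite_and_ncard_le hr (by linarith) hwidth hred hY1
  have hsub := setOf_spectrum_sqrt_subset_halfIntegralWindow (a := (k : ℝ) / (4 * π) - δ)
    (b := k / (4 * π) + δ) hred.1
  refine ⟨hfin.subset hsub, (Nat.cast_le.2 (Set.ncard_le_ncard hsub hfin)).trans
    (hcard.trans_eq ?_)⟩
  have hrn : (0 : ℝ) ≤ r ^ n := by positivity
  rw [show (k : ℝ) / (4 * π) + δ - (k / (4 * π) - δ) = 2 * δ by ring,
    show 5 * r * (2 * δ) = 10 * r * δ by ring, Real.mul_rpow (by positivity) (by positivity),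
    ← Real.rpow_mul (by positivity), Real.div_rpow hred.1.det_pos.le hrn,
    show -((n : ℝ) + 1) / 4 = -(((n : ℝ) + 1) / 4) by ring, Real.rpow_neg hrn, div_inv_eq_mul]
  ring_nf

theorem statement2 {n : ℕ} (hn : 1 ≤ n) (r ε : ℝ) (hr : 1 ≤ r)
    (hε : ε ∈ Set.Ioo (0 : ℝ) (1 / 2)) :
    ∃ C : ℝ, 0 < C ∧ ∀ k : ℕ, 2 ≤ k →
      ∀ Y : Matrix (Fin n) (Fin n) ℝ, ∀ hred : MinkReduced r Y,
        LoewnerLE 1 Y →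
        {T : Matrix (Fin n) (Fin n) ℝ | IsHalfIntegral T ∧
            ∀ μ ∈ spectrum ℝ
              (hred.1.posSemidef.sqrt * T * hred.1.posSemidef.sqrt),
              μ ∈ Set.Ioo ((k : ℝ) / (4 * π) - (k : ℝ) ^ ((1 : ℝ) / 2 + ε))
                ((k : ℝ) / (4 * π) + (k : ℝ) ^ ((1 : ℝ) / 2 + ε))}.Finite ∧
        ({T : Matrix (Fin n) (Fin n) ℝ | IsHalfIntegral T ∧
            ∀ μ ∈ spectrum ℝ
              (hred.1.posSemidef.sqrt * T * hred.1.posSemidef.sqrt),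
              μ ∈ Set.Ioo ((k : ℝ) / (4 * π) - (k : ℝ) ^ ((1 : ℝ) / 2 + ε))
                ((k : ℝ) / (4 * π) + (k : ℝ) ^ ((1 : ℝ) / 2 + ε))}.ncard : ℝ)
          ≤ C * (k : ℝ) ^ ((1 / 2 + ε) * (n * (n + 1) : ℝ) / 2) *
              Y.det ^ (-((n : ℝ) + 1) / 4) :=
  statement2_general r ε hr hε
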